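/- arXiv:1111.4804 — 5 statements merged into one kernel-verified Lean document; each statement's English description precedes it below -/
import Mathlib

section
/- Let A, B be invertible n×n real matrices and s a diagonal matrix with entries ±1 such that B s A is orthogonal. Write the polar decompositions B = V K and A = H U with U, V orthogonal and K, H positive definite. Then K = s H⁻¹ s and B s A = V s U. -/
open Matrix

set_option maxHeartbeats 1000000

theorem polar_decomposition_of_orthogonal_BsA
    {n : ℕ} (A B V K H U : Matrix (Fin n) (Fin n) ℝ)
    (ds : Fin n → ℝ) (hds : ∀ i, ds i = 1 ∨ ds i = -1)
    (hA : IsUnit A.det) (hB : IsUnit B.det)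
    (horth : (B * Matrix.diagonal ds * A)ᵀ * (B * Matrix.diagonal ds * A) = 1)
    (hV : Vᵀ * V = 1) (hU : Uᵀ * U = 1)
    (hK : K.PosDef) (hH : H.PosDef)
    (hBdecomp : B = V * K) (hAdecomp : A = H * U) :
    K = Matrix.diagonal ds * H⁻¹ * Matrix.diagonal ds ∧
    B * Matrix.diagonal ds * A = V * Matrix.diagonal ds * U := by
  set s : Matrix (Fin n) (Fin n) ℝ := Matrix.diagonal ds with hs
  have hss : s * s = 1 := by
    rw [hs, diagonal_mul_diagonal]
    convert diagonal_one using 2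
    ext i
    rcases hds i with h | h <;> simp [h]
  have hsT : sᵀ = s := by rw [hs, diagonal_transpose]
  have hsH : sᴴ = s := by
    rw [show sᴴ = sᵀ from rfl, hsT]
  have hUU : U * Uᵀ = 1 := mul_eq_one_comm.mp hU
  have hVV : V * Vᵀ = 1 := mul_eq_one_comm.mp hV
  have hKT : Kᵀ = K := hK.isHermitian.eq
  have hHT : Hᵀ = H := hH.isHermitian.eq
  have hHdet : IsUnit H.det := isUnit_iff_ne_zero.mpr hH.det_pos.ne'
  have hHinv : H⁻¹ * H = 1 := nonsing_inv_mul H hHdet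
  have hHinv' : H * H⁻¹ = 1 := mul_nonsing_inv H hHdet
  -- M := K * s * H, orthogonality of M
  have hM : (K * s * H)ᵀ * (K * s * H) = 1 := by
    have h1 : B * s * A = V * (K * s * H) * U := by
      rw [hBdecomp, hAdecomp]; noncomm_ring
    rw [h1] at horth
    have h2 : Uᵀ * ((K * s * H)ᵀ * (K * s * H)) * U = 1 := by
      calc Uᵀ * ((K * s * H)ᵀ * (K * s * H)) * U
          = Uᵀ * (K * s * H)ᵀ * (Vᵀ * V) * (K * s * H) * U := by rw [hV]; noncomm_ring
        _ = (V * (K * s * H) * U)ᵀ * (V * (K * s * H) * U) := by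
              simp only [transpose_mul]; noncomm_ring
        _ = 1 := horth
    calc (K * s * H)ᵀ * (K * s * H)
        = U * (Uᵀ * ((K * s * H)ᵀ * (K * s * H)) * U) * Uᵀ := by
          rw [show U * (Uᵀ * ((K * s * H)ᵀ * (K * s * H)) * U) * Uᵀ
              = (U * Uᵀ) * ((K * s * H)ᵀ * (K * s * H)) * (U * Uᵀ) by noncomm_ring,
            hUU, one_mul, mul_one]
      _ = 1 := by rw [h2]; simpa using hUU
  -- H * (s * K * K * s) * H = 1
  have hcore : H * (s * K * (K * s)) * H = 1 := by
    calc H * (s * K * (K * s)) * H = (K * s * H)ᵀ * (K * s * H) := by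
          simp only [transpose_mul, hsT, hKT, hHT]; noncomm_ring
      _ = 1 := hM
  have hX : s * K * (K * s) = H⁻¹ * H⁻¹ := by
    calc s * K * (K * s) = H⁻¹ * (H * (s * K * (K * s)) * H) * H⁻¹ := by
          rw [show H⁻¹ * (H * (s * K * (K * s)) * H) * H⁻¹
              = (H⁻¹ * H) * (s * K * (K * s)) * (H * H⁻¹) by noncomm_ring,
            hHinv, hHinv', one_mul, mul_one]
      _ = H⁻¹ * H⁻¹ := by rw [hcore]; simp
  have hsq : (s * K * s) ^ 2 = (H⁻¹) ^ 2 := by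
    rw [pow_two, pow_two, ← hX,
      show s * K * s * (s * K * s) = s * K * (s * s) * (K * s) by noncomm_ring,
      hss, mul_one]
  have hsKs : (s * K * s).PosSemidef := by
    have := hK.posSemidef.mul_mul_conjTranspose_same s
    rwa [hsH] at this
  have hfinal : s * K * s = H⁻¹ := by
    open scoped MatrixOrder Matrix.Norms.L2Operator in
    exact (CFC.sq_eq_sq_iff _ _ hsKs.nonneg hH.inv.posSemidef.nonneg).mp hsq
  have hKeq : K = s * H⁻¹ * s := by
    calc K = (s * s) * K * (s * s) := by rw [hss]; simp
      _ = s * (s * K * s) * s := by noncomm_ring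
      _ = s * H⁻¹ * s := by rw [hfinal]
  refine ⟨hKeq, ?_⟩
  rw [hBdecomp, hAdecomp, hKeq,
    show V * (s * H⁻¹ * s) * s * (H * U) = V * (s * (H⁻¹ * ((s * s) * H)) * U) by noncomm_ring,
    hss, one_mul, hHinv]
  noncomm_ring
end

section
/- Let U, V be n×n orthogonal matrices and {E_s : s ∈ D_n} a collection of Borel subsets of ℝ^n such that both {E_s} and {V s U(E_s)} cover ℝ^n up to Lebesgue-null sets and have pairwise intersections of Lebesgue measure zero. Define T(x) = V s U x for x ∈ E_s. If Σ, Ψ are positive definite matrices with V s U Σ (V s U)ᵀ = Ψ for every s with L(E_s) > 0, then the pushforward of N(0, Σ) under T equals N(0, Ψ). -/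
open Matrix MeasureTheory

/-- Density of the `n`-variate Gaussian with mean `θ` and covariance `S`. -/
noncomputable def gaussianPdf {n : ℕ} (θ : Fin n → ℝ) (S : Matrix (Fin n) (Fin n) ℝ)
    (x : Fin n → ℝ) : ℝ :=
  Real.sqrt (((2 * Real.pi) ^ n * S.det)⁻¹) *
    Real.exp (-(1 / 2) * ((x - θ) ⬝ᵥ S⁻¹.mulVec (x - θ)))

/-- The `n`-variate Gaussian measure `N(θ, S)` on `ℝⁿ`. -/
noncomputable def gaussianMeasure {n : ℕ} (θ : Fin n → ℝ) (S : Matrix (Fin n) (Fin n) ℝ) :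
    Measure (Fin n → ℝ) :=
  volume.withDensity fun x => ENNReal.ofReal (gaussianPdf θ S x)

variable {n : ℕ}

lemma orth_det_sq {M : Matrix (Fin n) (Fin n) ℝ} (hM : Mᵀ * M = 1) : M.det * M.det = 1 := by
  have := congrArg Matrix.det hM
  simpa [Matrix.det_mul, Matrix.det_transpose] using this

lemma pdf_transform {M : Matrix (Fin n) (Fin n) ℝ} (hM : Mᵀ * M = 1)
    (Sig : Matrix (Fin n) (Fin n) ℝ) (x : Fin n → ℝ) :
    gaussianPdf 0 (M * Sig * Mᵀ) (M.mulVec x) = gaussianPdf 0 Sig x := by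
  have hMMT : M * Mᵀ = 1 := mul_eq_one_comm.mp hM
  have hdet : (M * Sig * Mᵀ).det = Sig.det := by
    have h2 := orth_det_sq hM
    rw [Matrix.det_mul, Matrix.det_mul, Matrix.det_transpose]
    linear_combination Sig.det * h2
  have hMinv : M⁻¹ = Mᵀ := Matrix.inv_eq_left_inv hM
  have hMTinv : Mᵀ⁻¹ = M := by
    rw [← Matrix.transpose_nonsing_inv, hMinv, Matrix.transpose_transpose]
  have hinv : (M * Sig * Mᵀ)⁻¹ = M * Sig⁻¹ * Mᵀ := by
    rw [Matrix.mul_inv_rev, Matrix.mul_inv_rev, hMTinv, hMinv, Matrix.mul_assoc]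
  have hquad : (M.mulVec x) ⬝ᵥ (M * Sig⁻¹ * Mᵀ).mulVec (M.mulVec x)
      = x ⬝ᵥ Sig⁻¹.mulVec x := by
    rw [Matrix.mulVec_mulVec]
    have : M * Sig⁻¹ * Mᵀ * M = M * Sig⁻¹ := by
      rw [Matrix.mul_assoc, hM, Matrix.mul_one]
    rw [this, Matrix.dotProduct_mulVec, ← Matrix.mulVec_transpose, Matrix.mulVec_mulVec,
      Matrix.transpose_mul]
    rw [show Sig⁻¹ᵀ * Mᵀ * M = Sig⁻¹ᵀ by rw [Matrix.mul_assoc, hM, Matrix.mul_one]]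
    simp [Matrix.mulVec_transpose, Matrix.dotProduct_mulVec, dotProduct_comm]
  simp only [gaussianPdf, hdet, hinv, sub_zero]
  rw [hquad]

lemma mulVec_injective {M : Matrix (Fin n) (Fin n) ℝ} (hM : Mᵀ * M = 1) :
    Function.Injective M.mulVec := by
  intro x y h
  have := congrArg (Mᵀ.mulVec) h
  simpa [Matrix.mulVec_mulVec, hM] using this

lemma image_eq_preimage {M : Matrix (Fin n) (Fin n) ℝ} (hM : Mᵀ * M = 1)
    (S : Set (Fin n → ℝ)) : M.mulVec '' S = Mᵀ.mulVec ⁻¹' S := by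
  have hMMT : M * Mᵀ = 1 := mul_eq_one_comm.mp hM
  ext y
  constructor
  · rintro ⟨x, hx, rfl⟩
    simpa [Matrix.mulVec_mulVec, hM] using hx
  · intro hy
    exact ⟨Mᵀ.mulVec y, hy, by simp [Matrix.mulVec_mulVec, hMMT]⟩

lemma measurable_mulVec (M : Matrix (Fin n) (Fin n) ℝ) : Measurable (M.mulVec) := by
  have : Continuous (Matrix.toLin' M) := LinearMap.continuous_on_pi _
  convert this.measurable using 1
  funext x; rw [Matrix.toLin'_apply]

lemma measurable_gaussianPdf (θ : Fin n → ℝ) (S : Matrix (Fin n) (Fin n) ℝ) :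
    Measurable fun x => ENNReal.ofReal (gaussianPdf θ S x) := by
  have hq : Continuous fun x : Fin n → ℝ => (x - θ) ⬝ᵥ S⁻¹.mulVec (x - θ) := by
    simp only [dotProduct, Matrix.mulVec]
    fun_prop
  apply ENNReal.measurable_ofReal.comp
  exact (continuous_const.mul ((continuous_const.mul hq).rexp)).measurable

lemma gaussian_image {M : Matrix (Fin n) (Fin n) ℝ} (hM : Mᵀ * M = 1)
    (Sig : Matrix (Fin n) (Fin n) ℝ) {S : Set (Fin n → ℝ)} (hS : MeasurableSet S) :
    gaussianMeasure 0 (M * Sig * Mᵀ) (M.mulVec '' S) = gaussianMeasure 0 Sig S := by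
  have hdet2 := orth_det_sq hM
  have hdet0 : M.det ≠ 0 := fun h => by simp [h] at hdet2
  have habs : |M.det⁻¹| = 1 := by
    rcases mul_self_eq_one_iff.mp hdet2 with h | h <;> rw [h] <;> norm_num
  have hmeasimg : MeasurableSet (M.mulVec '' S) := by
    rw [image_eq_preimage hM]
    exact (measurable_mulVec Mᵀ) hS
  have hmap : Measure.map (Matrix.toLin' M) volume = volume := by
    rw [Real.map_matrix_volume_pi_eq_smul_volume_pi hdet0, habs]
    simp
  have hg : Measurable ((M.mulVec '' S).indicator
      fun y => ENNReal.ofReal (gaussianPdf 0 (M * Sig * Mᵀ) y)) :=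
    (measurable_gaussianPdf _ _).indicator hmeasimg
  have hinj := mulVec_injective hM
  calc gaussianMeasure 0 (M * Sig * Mᵀ) (M.mulVec '' S)
      = ∫⁻ y, ((M.mulVec '' S).indicator
          fun y => ENNReal.ofReal (gaussianPdf 0 (M * Sig * Mᵀ) y)) y ∂volume := by
        rw [gaussianMeasure, withDensity_apply _ hmeasimg, lintegral_indicator hmeasimg]
    _ = ∫⁻ x, ((M.mulVec '' S).indicator
          fun y => ENNReal.ofReal (gaussianPdf 0 (M * Sig * Mᵀ) y)) (Matrix.toLin' M x)
          ∂volume := by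
        rw [← lintegral_map hg (Matrix.toLin' M).continuous_on_pi.measurable, hmap]
    _ = ∫⁻ x, (S.indicator fun x => ENNReal.ofReal (gaussianPdf 0 Sig x)) x ∂volume := by
        congr 1
        ext x
        by_cases hx : x ∈ S
        · rw [Set.indicator_of_mem hx, Set.indicator_of_mem, Matrix.toLin'_apply,
            pdf_transform hM]
          rw [Matrix.toLin'_apply]
          exact ⟨x, hx, rfl⟩
        · rw [Set.indicator_of_notMem hx, Set.indicator_of_notMem]
          rw [Matrix.toLin'_apply]
          exact fun h => hx (hinj.mem_set_image.mp h)
    _ = gaussianMeasure 0 Sig S := by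
        rw [gaussianMeasure, withDensity_apply _ hS, lintegral_indicator hS]

lemma measure_eq_tsum_of_cover {α ι : Type*} [Countable ι] [MeasurableSpace α]
    {ρ μ' : Measure α} (hac : μ' ≪ ρ) (G : ι → Set α) (hG : ∀ i, MeasurableSet (G i))
    (hcov : ρ (⋃ i, G i)ᶜ = 0) (hdisj : ∀ i j, i ≠ j → ρ (G i ∩ G j) = 0)
    {A : Set α} (hA : MeasurableSet A) : μ' A = ∑' i, μ' (A ∩ G i) := by
  have h0 : μ' (A \ ⋃ i, G i) = 0 :=
    measure_mono_null (Set.diff_subset_compl _ _) (hac hcov)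
  have h1 : μ' A = μ' (⋃ i, A ∩ G i) := by
    rw [← Set.inter_iUnion, ← measure_inter_add_diff A (MeasurableSet.iUnion hG), h0, add_zero]
  rw [h1, measure_iUnion₀]
  · intro i j hij
    exact measure_mono_null (Set.inter_subset_inter Set.inter_subset_right
      Set.inter_subset_right) (hac (hdisj i j hij))
  · exact fun i => (hA.inter (hG i)).nullMeasurableSet

lemma mulVec_surjective {M : Matrix (Fin n) (Fin n) ℝ} (hM : Mᵀ * M = 1) :
    Function.Surjective M.mulVec := by
  have hMMT : M * Mᵀ = 1 := mul_eq_one_comm.mp hM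
  exact fun y => ⟨Mᵀ.mulVec y, by simp [Matrix.mulVec_mulVec, hMMT]⟩

lemma map_mulVec_volume {M : Matrix (Fin n) (Fin n) ℝ} (hM : Mᵀ * M = 1) :
    Measure.map M.mulVec volume = volume := by
  have hdet2 := orth_det_sq hM
  have hdet0 : M.det ≠ 0 := fun h => by simp [h] at hdet2
  have habs : |M.det⁻¹| = 1 := by
    rcases mul_self_eq_one_iff.mp hdet2 with h | h <;> rw [h] <;> norm_num
  have : M.mulVec = ⇑(Matrix.toLin' M) := by funext x; rw [Matrix.toLin'_apply]
  rw [this, Real.map_matrix_volume_pi_eq_smul_volume_pi hdet0, habs]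
  simp

lemma volume_image_eq {M : Matrix (Fin n) (Fin n) ℝ} (hM : Mᵀ * M = 1)
    {S : Set (Fin n → ℝ)} (hS : MeasurableSet S) : volume (M.mulVec '' S) = volume S := by
  have hMMT : M * Mᵀ = 1 := mul_eq_one_comm.mp hM
  have hMT : Mᵀᵀ * Mᵀ = 1 := by rw [Matrix.transpose_transpose]; exact hMMT
  rw [image_eq_preimage hM, ← Measure.map_apply (measurable_mulVec Mᵀ) hS,
    map_mulVec_volume hMT]

/-- The ±1 diagonal entries associated to a sign pattern `σ : Fin n → Bool`. -/
def sgn {n : ℕ} (σ : Fin n → Bool) : Fin n → ℝ := fun i => if σ i then 1 else -1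

theorem map_gaussian_of_piecewise_orthogonal
    {n : ℕ} (U V : Matrix (Fin n) (Fin n) ℝ)
    (hU : Uᵀ * U = 1) (hV : Vᵀ * V = 1)
    (E : (Fin n → Bool) → Set (Fin n → ℝ))
    (hEmeas : ∀ σ, MeasurableSet (E σ))
    (hEcover : volume (⋃ σ, E σ)ᶜ = 0)
    (hEdisj : ∀ σ τ, σ ≠ τ → volume (E σ ∩ E τ) = 0)
    (hFcover : volume (⋃ σ, (V * Matrix.diagonal (sgn σ) * U).mulVec '' E σ)ᶜ = 0)
    (hFdisj : ∀ σ τ, σ ≠ τ →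
      volume ((V * Matrix.diagonal (sgn σ) * U).mulVec '' E σ ∩
        (V * Matrix.diagonal (sgn τ) * U).mulVec '' E τ) = 0)
    (T : (Fin n → ℝ) → (Fin n → ℝ)) (hT : Measurable T)
    (hTdef : ∀ σ, ∀ x ∈ E σ, T x = (V * Matrix.diagonal (sgn σ) * U).mulVec x)
    (Sig Psi : Matrix (Fin n) (Fin n) ℝ) (hSig : Sig.PosDef) (hPsi : Psi.PosDef)
    (hconj : ∀ σ, volume (E σ) ≠ 0 →
      (V * Matrix.diagonal (sgn σ) * U) * Sig * (V * Matrix.diagonal (sgn σ) * U)ᵀ = Psi) :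
    Measure.map T (gaussianMeasure 0 Sig) = gaussianMeasure 0 Psi := by
  set M : (Fin n → Bool) → Matrix (Fin n) (Fin n) ℝ :=
    fun σ => V * Matrix.diagonal (sgn σ) * U with hMdef
  have hMorth : ∀ σ, (M σ)ᵀ * (M σ) = 1 := by
    intro σ
    have hDD : Matrix.diagonal (sgn σ) * Matrix.diagonal (sgn σ) = 1 := by
      rw [Matrix.diagonal_mul_diagonal]
      have : (fun i => sgn σ i * sgn σ i) = fun _ => (1 : ℝ) := by
        funext i; by_cases h : σ i <;> simp [sgn, h]
      rw [this, Matrix.diagonal_one]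
    simp only [hMdef, Matrix.transpose_mul, Matrix.diagonal_transpose]
    simp only [← Matrix.mul_assoc]
    rw [Matrix.mul_assoc (Uᵀ * Matrix.diagonal (sgn σ)) Vᵀ V, hV, Matrix.mul_one,
      Matrix.mul_assoc Uᵀ (Matrix.diagonal (sgn σ)), hDD, Matrix.mul_one, hU]
  have hac : ∀ θ S, gaussianMeasure θ S ≪ (volume : Measure (Fin n → ℝ)) :=
    fun θ S => withDensity_absolutelyContinuous _ _
  set F : (Fin n → Bool) → Set (Fin n → ℝ) := fun σ => (M σ).mulVec '' E σ with hFdef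
  have hFmeas : ∀ σ, MeasurableSet (F σ) := by
    intro σ
    show MeasurableSet ((M σ).mulVec '' E σ)
    rw [image_eq_preimage (hMorth σ)]
    exact (measurable_mulVec _) (hEmeas σ)
  ext A hA
  rw [Measure.map_apply hT hA,
    measure_eq_tsum_of_cover (hac 0 Sig) E hEmeas hEcover hEdisj (hT hA),
    measure_eq_tsum_of_cover (hac 0 Psi) F hFmeas hFcover hFdisj hA]
  apply tsum_congr
  intro σ
  by_cases h0 : volume (E σ) = 0
  · have hμ : gaussianMeasure 0 Sig (T ⁻¹' A ∩ E σ) = 0 :=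
      measure_mono_null Set.inter_subset_right (hac 0 Sig h0)
    have hvolF : volume (F σ) = 0 := by
      show volume ((M σ).mulVec '' E σ) = 0
      rw [volume_image_eq (hMorth σ) (hEmeas σ)]; exact h0
    have hν : gaussianMeasure 0 Psi (A ∩ F σ) = 0 :=
      measure_mono_null Set.inter_subset_right (hac 0 Psi hvolF)
    rw [hμ, hν]
  · have hPsi' := hconj σ h0
    have hset1 : T ⁻¹' A ∩ E σ = E σ ∩ (M σ).mulVec ⁻¹' A := by
      ext x
      simp only [Set.mem_inter_iff, Set.mem_preimage]
      constructor
      · rintro ⟨hxA, hxE⟩; exact ⟨hxE, by rwa [← hTdef σ x hxE]⟩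
      · rintro ⟨hxE, hxA⟩; exact ⟨by rwa [hTdef σ x hxE], hxE⟩
    have hset2 : A ∩ (M σ).mulVec '' E σ = (M σ).mulVec '' (E σ ∩ (M σ).mulVec ⁻¹' A) := by
      rw [Set.image_inter (mulVec_injective (hMorth σ)),
        Set.image_preimage_eq _ (mulVec_surjective (hMorth σ)), Set.inter_comm]
    rw [hset1, hset2, ← hPsi',
      gaussian_image (hMorth σ) Sig ((hEmeas σ).inter ((measurable_mulVec _) hA))]
end

section
/- Let Σ₁, Σ₂, Ψ₁, Ψ₂ be positive definite n×n matrices such that det((t+1/2)Σ₁⁻¹ - tΣ₂⁻¹)·det(Σ₁) = det((t+1/2)Ψ₁⁻¹ - tΨ₂⁻¹)·det(Ψ₁) for all t in a neighborhood of 0 in ℝ. Then Σ₁^{1/2} Σ₂⁻¹ Σ₁^{1/2} and Ψ₁^{1/2} Ψ₂⁻¹ Ψ₁^{1/2} have the same characteristic polynomial. -/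
open Matrix Polynomial

lemma my_eval_charpoly {n : ℕ} (M : Matrix (Fin n) (Fin n) ℝ) (z : ℝ) :
    M.charpoly.eval z = (z • (1 : Matrix (Fin n) (Fin n) ℝ) - M).det := by
  rw [Matrix.charpoly, ← coe_evalRingHom, RingHom.map_det]
  congr 1
  ext i j
  by_cases h : i = j
  · subst h
    simp [Matrix.charmatrix_apply, Matrix.one_apply]
  · simp [Matrix.charmatrix_apply, Matrix.one_apply, Matrix.diagonal_apply_ne _ h, h]

lemma my_conj_one {n : ℕ} (R₁ S₁ : Matrix (Fin n) (Fin n) ℝ)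
    (hR₁ : R₁.PosDef) (hR₁sq : R₁ * R₁ = S₁) :
    R₁ * S₁⁻¹ * R₁ = 1 := by
  have hd : IsUnit R₁.det := isUnit_iff_ne_zero.mpr (ne_of_gt hR₁.det_pos)
  rw [← hR₁sq, Matrix.mul_inv_rev]
  calc R₁ * (R₁⁻¹ * R₁⁻¹) * R₁ = (R₁ * R₁⁻¹) * (R₁⁻¹ * R₁) := by
        noncomm_ring
    _ = 1 := by rw [Matrix.mul_nonsing_inv _ hd, Matrix.nonsing_inv_mul _ hd, one_mul]

lemma my_det_transform {n : ℕ} (S₁ S₂ : Matrix (Fin n) (Fin n) ℝ)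
    (R₁ : Matrix (Fin n) (Fin n) ℝ)
    (hR₁ : R₁.PosDef) (hR₁sq : R₁ * R₁ = S₁) (a b : ℝ) :
    (a • S₁⁻¹ - b • S₂⁻¹).det * S₁.det =
      (a • (1 : Matrix (Fin n) (Fin n) ℝ) - b • (R₁ * S₂⁻¹ * R₁)).det := by
  have key : a • (1 : Matrix (Fin n) (Fin n) ℝ) - b • (R₁ * S₂⁻¹ * R₁)
      = R₁ * (a • S₁⁻¹ - b • S₂⁻¹) * R₁ := by
    rw [Matrix.mul_sub, Matrix.sub_mul, Matrix.mul_smul, Matrix.mul_smul,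
      Matrix.smul_mul, Matrix.smul_mul, my_conj_one R₁ S₁ hR₁ hR₁sq]
  rw [key, Matrix.det_mul, Matrix.det_mul, ← hR₁sq, Matrix.det_mul]
  ring

theorem same_charpoly_of_det_identity
    {n : ℕ} (S₁ S₂ P₁ P₂ : Matrix (Fin n) (Fin n) ℝ)
    (hS₁ : S₁.PosDef) (hS₂ : S₂.PosDef) (hP₁ : P₁.PosDef) (hP₂ : P₂.PosDef)
    (R₁ Q₁ : Matrix (Fin n) (Fin n) ℝ)
    (hR₁ : R₁.PosDef) (hR₁sq : R₁ * R₁ = S₁)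
    (hQ₁ : Q₁.PosDef) (hQ₁sq : Q₁ * Q₁ = P₁)
    (hdet : ∃ δ > (0 : ℝ), ∀ t : ℝ, |t| < δ →
      ((t + 1 / 2) • S₁⁻¹ - t • S₂⁻¹).det * S₁.det =
        ((t + 1 / 2) • P₁⁻¹ - t • P₂⁻¹).det * P₁.det) :
    (R₁ * S₂⁻¹ * R₁).charpoly = (Q₁ * P₂⁻¹ * Q₁).charpoly := by
  obtain ⟨δ, hδ, hdet⟩ := hdet
  set A := R₁ * S₂⁻¹ * R₁ with hA
  set B := Q₁ * P₂⁻¹ * Q₁ with hB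
  apply Polynomial.eq_of_infinite_eval_eq
  apply Set.Infinite.mono (s := Set.Ioi (1 + 1 / (2 * δ)))
  swap
  · exact Set.Ioi_infinite _
  intro z hz
  simp only [Set.mem_Ioi] at hz
  simp only [Set.mem_setOf_eq]
  -- choose t = 1/(2(z-1))
  have hδ2 : (0 : ℝ) < 1 / (2 * δ) := by positivity
  have hz1 : (1 : ℝ) < z := by linarith
  set t : ℝ := 1 / (2 * (z - 1)) with ht
  have htpos : 0 < t := by
    apply div_pos one_pos
    nlinarith
  have htδ : t < δ := by
    have h2 : 1 / (2 * δ) < z - 1 := by linarith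
    have h3 := (div_lt_iff₀ (by positivity : (0:ℝ) < 2 * δ)).mp h2
    rw [ht, div_lt_iff₀ (by nlinarith)]
    nlinarith
  have habs : |t| < δ := by rwa [abs_of_pos htpos]
  have h1 := hdet t habs
  rw [my_det_transform S₁ S₂ R₁ hR₁ hR₁sq, my_det_transform P₁ P₂ Q₁ hQ₁ hQ₁sq] at h1
  have hne : z - 1 ≠ 0 := sub_ne_zero.mpr (ne_of_gt hz1)
  have htz : t * z = t + 1 / 2 := by
    rw [ht]
    field_simp
    ring
  have hsmulA : (t + 1 / 2) • (1 : Matrix (Fin n) (Fin n) ℝ) - t • A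
      = t • (z • (1 : Matrix (Fin n) (Fin n) ℝ) - A) := by
    rw [smul_sub, smul_smul, htz]
  have hsmulB : (t + 1 / 2) • (1 : Matrix (Fin n) (Fin n) ℝ) - t • B
      = t • (z • (1 : Matrix (Fin n) (Fin n) ℝ) - B) := by
    rw [smul_sub, smul_smul, htz]
  rw [hsmulA, hsmulB, Matrix.det_smul, Matrix.det_smul, Fintype.card_fin] at h1
  have htn : (t : ℝ) ^ n ≠ 0 := pow_ne_zero _ (ne_of_gt htpos)
  have h2 := mul_left_cancel₀ htn h1
  rw [my_eval_charpoly, my_eval_charpoly, h2]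
end

section
/- Let U, V be orthogonal n×n matrices, {E_s : s ∈ D_n} Borel sets forming a Lebesgue partition of ℝ^n (union conull, pairwise intersections null) and define T(x) = Σ_s 1_{E_s}(x) V s U x. Then T is injective on a conull Borel set, and on T of that set, T⁻¹(y) = Σ_s 1_{VsU(E_s)}(y) U⁻¹ s V⁻¹ y, provided {V s U(E_s) : s ∈ D_n} is also a Lebesgue partition. -/
open Matrix MeasureTheory

/-- Auxiliary general lemma: a piecewise map given by orthogonal matrices `M σ`
on a Lebesgue partition `E σ` is injective on a conull Borel set, with the
expected piecewise inverse. -/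
theorem aux_piecewise_inverse {n : ℕ} (M : (Fin n → Bool) → Matrix (Fin n) (Fin n) ℝ)
    (hMM : ∀ σ, (M σ)ᵀ * M σ = 1)
    (E : (Fin n → Bool) → Set (Fin n → ℝ))
    (hEmeas : ∀ σ, MeasurableSet (E σ))
    (hEcover : volume (⋃ σ, E σ)ᶜ = 0)
    (hEdisj : ∀ σ τ, σ ≠ τ → volume (E σ ∩ E τ) = 0)
    (hFdisj : ∀ σ τ, σ ≠ τ →
      volume ((M σ).mulVec '' E σ ∩ (M τ).mulVec '' E τ) = 0)
    (T : (Fin n → ℝ) → (Fin n → ℝ))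
    (hTdef : ∀ x, T x = ∑ σ : Fin n → Bool,
      Set.indicator (E σ) (fun y => (M σ).mulVec y) x) :
    ∃ G : Set (Fin n → ℝ), MeasurableSet G ∧ volume Gᶜ = 0 ∧ Set.InjOn T G ∧
      ∀ x ∈ G, (∑ σ : Fin n → Bool,
        Set.indicator ((M σ).mulVec '' E σ)
          (fun y => ((M σ)⁻¹).mulVec y) (T x)) = x := by
  classical
  have hleft : ∀ σ, (M σ)⁻¹ * M σ = 1 := by
    intro σ; rw [Matrix.inv_eq_left_inv (hMM σ)]; exact hMM σ
  have hright : ∀ σ, M σ * (M σ)⁻¹ = 1 := by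
    intro σ; rw [Matrix.inv_eq_left_inv (hMM σ)]
    exact mul_eq_one_comm.mp (hMM σ)
  have hcancel : ∀ σ x, ((M σ)⁻¹).mulVec ((M σ).mulVec x) = x := by
    intro σ x; rw [Matrix.mulVec_mulVec, hleft, Matrix.one_mulVec]
  have hcancel' : ∀ σ x, (M σ).mulVec (((M σ)⁻¹).mulVec x) = x := by
    intro σ x; rw [Matrix.mulVec_mulVec, hright, Matrix.one_mulVec]
  have hdet : ∀ σ, (M σ).det ≠ 0 := by
    intro σ
    have h1 : (M σ).det * (M σ).det = 1 := by
      have := congrArg Matrix.det (hMM σ)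
      simpa [Matrix.det_mul, Matrix.det_transpose] using this
    intro h; rw [h, mul_zero] at h1; exact zero_ne_one h1
  have hcont : ∀ (A : Matrix (Fin n) (Fin n) ℝ), Continuous A.mulVec := fun A =>
    LinearMap.continuous_of_finiteDimensional (Matrix.mulVecLin A)
  have himg : ∀ σ, (M σ).mulVec '' E σ = ((M σ)⁻¹).mulVec ⁻¹' E σ := by
    intro σ; ext y
    constructor
    · rintro ⟨x, hx, rfl⟩; simpa [hcancel σ x] using hx
    · intro hy; exact ⟨_, hy, hcancel' σ y⟩
  have hFmeas : ∀ σ, MeasurableSet ((M σ).mulVec '' E σ) := by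
    intro σ; rw [himg σ]; exact (hcont _).measurable (hEmeas σ)
  have hnull : ∀ σ (s : Set (Fin n → ℝ)), volume s = 0 →
      volume ((M σ).mulVec ⁻¹' s) = 0 := by
    intro σ s hs
    have heq : (M σ).mulVec ⁻¹' s = (Matrix.mulVecLin (M σ)) ⁻¹' s := rfl
    have hd : LinearMap.det (Matrix.mulVecLin (M σ)) ≠ 0 := by
      rw [show LinearMap.det (Matrix.mulVecLin (M σ)) = (M σ).det from
        LinearMap.det_toLin' (M σ)]
      exact hdet σ
    rw [heq, Measure.addHaar_preimage_linearMap volume hd s, hs, mul_zero]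
  set N : Set (Fin n → ℝ) :=
    ⋃ σ, ⋃ τ, ⋃ _ : σ ≠ τ,
      ((E σ ∩ E τ) ∪ (E σ ∩ (M σ).mulVec ⁻¹' ((M τ).mulVec '' E τ))) with hN
  have hNmeas : MeasurableSet N := by
    refine MeasurableSet.iUnion fun σ => MeasurableSet.iUnion fun τ =>
      MeasurableSet.iUnion fun _ => ?_
    exact ((hEmeas σ).inter (hEmeas τ)).union
      ((hEmeas σ).inter ((hcont _).measurable (hFmeas τ)))
  have hNnull : volume N = 0 := by
    refine measure_iUnion_null fun σ => measure_iUnion_null fun τ =>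
      measure_iUnion_null fun h => measure_union_null (hEdisj σ τ h) ?_
    refine measure_mono_null (fun x hx => ?_) (hnull σ _ (hFdisj σ τ h))
    exact ⟨Set.mem_image_of_mem _ hx.1, hx.2⟩
  have key : ∀ x ∈ (⋃ σ, E σ) \ N,
      (∑ σ : Fin n → Bool,
        Set.indicator ((M σ).mulVec '' E σ)
          (fun y => ((M σ)⁻¹).mulVec y) (T x)) = x := by
    intro x hx
    obtain ⟨hxU, hxN⟩ := hx
    obtain ⟨σ, hσ⟩ := Set.mem_iUnion.mp hxU
    have hnot : ∀ τ, τ ≠ σ → x ∉ E τ := by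
      intro τ hτ hxτ
      exact hxN (Set.mem_iUnion.mpr ⟨σ, Set.mem_iUnion.mpr ⟨τ,
        Set.mem_iUnion.mpr ⟨Ne.symm hτ, Or.inl ⟨hσ, hxτ⟩⟩⟩⟩)
    have hTx : T x = (M σ).mulVec x := by
      rw [hTdef]
      rw [Finset.sum_eq_single σ]
      · exact Set.indicator_of_mem hσ _
      · intro τ _ hτ
        exact Set.indicator_of_notMem (hnot τ hτ) _
      · intro h; exact absurd (Finset.mem_univ σ) h
    have hmem : T x ∈ (M σ).mulVec '' E σ := by
      rw [hTx]; exact Set.mem_image_of_mem _ hσ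
    have hnotF : ∀ τ, τ ≠ σ → T x ∉ (M τ).mulVec '' E τ := by
      intro τ hτ hmemτ
      apply hxN
      refine Set.mem_iUnion.mpr ⟨σ, Set.mem_iUnion.mpr ⟨τ,
        Set.mem_iUnion.mpr ⟨Ne.symm hτ, Or.inr ⟨hσ, ?_⟩⟩⟩⟩
      rw [Set.mem_preimage, ← hTx]; exact hmemτ
    rw [Finset.sum_eq_single σ]
    · rw [Set.indicator_of_mem hmem, hTx, hcancel]
    · intro τ _ hτ; exact Set.indicator_of_notMem (hnotF τ hτ) _
    · intro h; exact absurd (Finset.mem_univ σ) h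
  refine ⟨(⋃ σ, E σ) \ N,
    (MeasurableSet.iUnion fun σ => hEmeas σ).diff hNmeas, ?_, ?_, key⟩
  · refine measure_mono_null (fun x hx => ?_) (measure_union_null hEcover hNnull)
    simp only [Set.mem_compl_iff, Set.mem_diff, not_and, not_not] at hx
    by_cases h : x ∈ ⋃ σ, E σ
    · exact Or.inr (hx h)
    · exact Or.inl h
  · intro x hx y hy hxy
    rw [← key x hx, ← key y hy, hxy]

theorem piecewise_orthogonal_map_inverse
    {n : ℕ} (U V : Matrix (Fin n) (Fin n) ℝ)
    (hU : Uᵀ * U = 1) (hV : Vᵀ * V = 1)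
    (E : (Fin n → Bool) → Set (Fin n → ℝ))
    (hEmeas : ∀ σ, MeasurableSet (E σ))
    (hEcover : volume (⋃ σ, E σ)ᶜ = 0)
    (hEdisj : ∀ σ τ, σ ≠ τ → volume (E σ ∩ E τ) = 0)
    (hFcover : volume (⋃ σ,
      (V * Matrix.diagonal (fun j => if σ j then (1 : ℝ) else -1) * U).mulVec '' E σ)ᶜ = 0)
    (hFdisj : ∀ σ τ, σ ≠ τ →
      volume ((V * Matrix.diagonal (fun j => if σ j then (1 : ℝ) else -1) * U).mulVec '' E σ ∩
        (V * Matrix.diagonal (fun j => if τ j then (1 : ℝ) else -1) * U).mulVec '' E τ) = 0)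
    (T : (Fin n → ℝ) → (Fin n → ℝ))
    (hTdef : ∀ x, T x = ∑ σ : Fin n → Bool,
      Set.indicator (E σ)
        (fun y => (V * Matrix.diagonal (fun j => if σ j then (1 : ℝ) else -1) * U).mulVec y) x) :
    ∃ G : Set (Fin n → ℝ), MeasurableSet G ∧ volume Gᶜ = 0 ∧ Set.InjOn T G ∧
      ∀ x ∈ G,
        (∑ σ : Fin n → Bool,
          Set.indicator
            ((V * Matrix.diagonal (fun j => if σ j then (1 : ℝ) else -1) * U).mulVec '' E σ)
            (fun y =>
              (U⁻¹ * Matrix.diagonal (fun j => if σ j then (1 : ℝ) else -1) * V⁻¹).mulVec y)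
            (T x)) = x := by
  classical
  have hU' : U⁻¹ = Uᵀ := Matrix.inv_eq_left_inv hU
  have hV' : V⁻¹ = Vᵀ := Matrix.inv_eq_left_inv hV
  have hDD : ∀ σ : Fin n → Bool,
      Matrix.diagonal (fun j => if σ j then (1 : ℝ) else -1) *
        Matrix.diagonal (fun j => if σ j then (1 : ℝ) else -1) = 1 := by
    intro σ
    rw [Matrix.diagonal_mul_diagonal]
    rw [show (fun i => (if σ i then (1 : ℝ) else -1) * (if σ i then (1 : ℝ) else -1))
        = fun _ : Fin n => (1 : ℝ) from funext fun i => by split_ifs <;> norm_num]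
    exact Matrix.diagonal_one
  have hprod : ∀ σ : Fin n → Bool,
      (Uᵀ * Matrix.diagonal (fun j => if σ j then (1 : ℝ) else -1) * Vᵀ) *
        (V * Matrix.diagonal (fun j => if σ j then (1 : ℝ) else -1) * U) = 1 := by
    intro σ
    simp only [Matrix.mul_assoc]
    rw [← Matrix.mul_assoc Vᵀ V, hV, Matrix.one_mul,
      ← Matrix.mul_assoc (Matrix.diagonal _) (Matrix.diagonal _), hDD, Matrix.one_mul, hU]
  have hMM : ∀ σ : Fin n → Bool,
      (V * Matrix.diagonal (fun j => if σ j then (1 : ℝ) else -1) * U)ᵀ *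
        (V * Matrix.diagonal (fun j => if σ j then (1 : ℝ) else -1) * U) = 1 := by
    intro σ
    rw [show (V * Matrix.diagonal (fun j => if σ j then (1 : ℝ) else -1) * U)ᵀ
        = Uᵀ * Matrix.diagonal (fun j => if σ j then (1 : ℝ) else -1) * Vᵀ by
      rw [Matrix.transpose_mul, Matrix.transpose_mul, Matrix.diagonal_transpose,
        Matrix.mul_assoc]]
    exact hprod σ
  have keyM : ∀ σ : Fin n → Bool,
      U⁻¹ * Matrix.diagonal (fun j => if σ j then (1 : ℝ) else -1) * V⁻¹ =
        (V * Matrix.diagonal (fun j => if σ j then (1 : ℝ) else -1) * U)⁻¹ := by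
    intro σ
    rw [hU', hV']
    exact (Matrix.inv_eq_left_inv (hprod σ)).symm
  obtain ⟨G, hGm, hGn, hGinj, hGform⟩ :=
    aux_piecewise_inverse
      (fun σ => V * Matrix.diagonal (fun j => if σ j then (1 : ℝ) else -1) * U)
      hMM E hEmeas hEcover hEdisj hFdisj T hTdef
  refine ⟨G, hGm, hGn, hGinj, fun x hx => ?_⟩
  simp only [keyM]
  exact hGform x hx
end

section
/- Let Ψ, M be n×n positive definite matrices, c > 0 a constant, and {F_s : s ∈ S} (S finite, nonempty) a family of Borel sets covering ℝ^n up to a null set, such that exp(-½ xᵀΨ⁻¹x) = c · Σ_s 1_{F_s}(x) exp(-½ xᵀ M_s x) a.e. x, for positive definite matrices M_s. Then for every s with L(F_s) > 0, c = 1 and M_s = Ψ⁻¹. -/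
open Matrix MeasureTheory

lemma measurable_mveval {m : ℕ} (p : MvPolynomial (Fin m) ℝ) :
    Measurable fun x : Fin m → ℝ => MvPolynomial.eval x p := by
  induction p using MvPolynomial.induction_on with
  | C a => simpa using measurable_const
  | add p q hp hq => simp; exact hp.add hq
  | mul_X p i hp => simp; exact hp.mul (measurable_pi_apply i)

lemma mvpoly_zero_of_nonnull :
    ∀ (m : ℕ) (p : MvPolynomial (Fin m) ℝ),
      volume {x : Fin m → ℝ | MvPolynomial.eval x p = 0} ≠ 0 → p = 0 := by
  intro m
  induction m with
  | zero =>
    intro p hp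
    obtain ⟨x, hx⟩ := nonempty_of_measure_ne_zero hp
    obtain ⟨r, rfl⟩ := MvPolynomial.C_surjective (Fin 0) p
    simp only [Set.mem_setOf_eq, MvPolynomial.eval_C] at hx
    rw [hx, map_zero]
  | succ k ih =>
    intro p hp
    by_contra hp0
    apply hp
    set q : Polynomial (MvPolynomial (Fin k) ℝ) := MvPolynomial.finSuccEquiv ℝ k p with hq
    have hq0 : q ≠ 0 := by
      simp [hq, hp0]
    have hd : q.coeff q.natDegree ≠ 0 := Polynomial.leadingCoeff_ne_zero.mpr hq0
    set d := q.natDegree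
    -- the "bad" set of tails
    have hN : volume {x : Fin k → ℝ | MvPolynomial.eval x (q.coeff d) = 0} = 0 := by
      by_contra h
      exact hd (ih _ h)
    -- the slice set
    set s' : Set ((Fin k → ℝ) × ℝ) :=
      {y | Polynomial.eval y.2 (Polynomial.map (MvPolynomial.eval y.1) q) = 0} with hs'def
    have hcons : Measurable fun y : (Fin k → ℝ) × ℝ => (Fin.cons y.2 y.1 : Fin (k+1) → ℝ) := by
      apply measurable_pi_lambda
      intro i
      induction i using Fin.cases with
      | zero => simpa using measurable_snd
      | succ j => simp; exact (measurable_pi_apply j).comp measurable_fst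
    have hs'eq : s' = (fun y : (Fin k → ℝ) × ℝ =>
        MvPolynomial.eval (Fin.cons y.2 y.1 : Fin (k+1) → ℝ) p) ⁻¹' {0} := by
      ext y
      simp [hs'def, MvPolynomial.eval_eq_eval_mv_eval', hq]
    have hs'meas : MeasurableSet s' := by
      rw [hs'eq]
      exact ((measurable_mveval p).comp hcons) (measurableSet_singleton 0)
    have hs'null : (volume : Measure (Fin k → ℝ)).prod volume s' = 0 := by
      rw [Measure.measure_prod_null hs'meas]
      have hcompl : ∀ x : Fin k → ℝ, MvPolynomial.eval x (q.coeff d) ≠ 0 →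
          volume (Prod.mk x ⁻¹' s') = 0 := by
        intro x hx
        have hmap : Polynomial.map (MvPolynomial.eval x) q ≠ 0 := by
          intro h
          apply hx
          rw [← Polynomial.coeff_map, h, Polynomial.coeff_zero]
        have : Prod.mk x ⁻¹' s' = {a | (Polynomial.map (MvPolynomial.eval x) q).IsRoot a} := rfl
        rw [this]
        exact (Polynomial.finite_setOf_isRoot hmap).measure_zero _
      have h1 : ∀ᵐ x : Fin k → ℝ, MvPolynomial.eval x (q.coeff d) ≠ 0 := by
        rw [ae_iff]
        simpa using hN
      filter_upwards [h1] with x hx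
      simpa using hcompl x hx
    -- transfer to Fin (k+1) → ℝ via measurable equivs
    have hswap : (volume : Measure (ℝ × (Fin k → ℝ))) (Prod.swap ⁻¹' s') = 0 := by
      rw [Measure.volume_eq_prod]
      rw [(Measure.measurePreserving_swap).measure_preimage hs'meas.nullMeasurableSet]
      rw [← Measure.volume_eq_prod]
      rw [Measure.volume_eq_prod]
      exact hs'null
    set e := MeasurableEquiv.piFinSuccAbove (fun _ : Fin (k+1) => ℝ) 0 with he
    have hep : MeasurePreserving e volume volume :=
      volume_preserving_piFinSuccAbove (fun _ : Fin (k+1) => ℝ) 0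
    have hZ : {x : Fin (k+1) → ℝ | MvPolynomial.eval x p = 0} = e ⁻¹' (Prod.swap ⁻¹' s') := by
      ext x
      have hx0 : e x = (x 0, fun j => x (Fin.succAbove 0 j)) := rfl
      simp only [Set.mem_preimage, hx0, Prod.swap, hs'def, Set.mem_setOf_eq]
      rw [← MvPolynomial.eval_eq_eval_mv_eval']
      have : (Fin.cons (x 0) (fun j => x (Fin.succAbove 0 j)) : Fin (k+1) → ℝ) = x := by
        ext i
        induction i using Fin.cases with
        | zero => simp
        | succ j => simp [Fin.succAbove]
      rw [this]
    rw [hZ]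
    rw [hep.measure_preimage]
    · exact hswap
    · exact (hs'meas.preimage measurable_swap).nullMeasurableSet

theorem gaussian_density_piecewise_identity
    {n : ℕ} {S : Type*} [Fintype S] [Nonempty S]
    (Psi : Matrix (Fin n) (Fin n) ℝ) (hPsi : Psi.PosDef)
    (M : S → Matrix (Fin n) (Fin n) ℝ) (hM : ∀ s, (M s).PosDef)
    (c : ℝ) (hc : 0 < c)
    (F : S → Set (Fin n → ℝ)) (hFmeas : ∀ s, MeasurableSet (F s))
    (hcover : volume (⋃ s, F s)ᶜ = 0)
    (hdisj : ∀ s t, s ≠ t → volume (F s ∩ F t) = 0)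
    (hid : ∀ᵐ x : Fin n → ℝ,
      Real.exp (-(1 / 2) * (x ⬝ᵥ Psi⁻¹.mulVec x)) =
        c * ∑ s : S, Set.indicator (F s)
          (fun y => Real.exp (-(1 / 2) * (y ⬝ᵥ (M s).mulVec y))) x) :
    ∀ s : S, volume (F s) ≠ 0 → c = 1 ∧ M s = Psi⁻¹ := by
  intro s₀ hs₀
  classical
  set B : Matrix (Fin n) (Fin n) ℝ := M s₀ - Psi⁻¹ with hB
  set p : MvPolynomial (Fin n) ℝ :=
    (∑ i, ∑ j, MvPolynomial.C (B i j) * MvPolynomial.X i * MvPolynomial.X j)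
      - MvPolynomial.C (2 * Real.log c) with hpdef
  have heval : ∀ x : Fin n → ℝ,
      MvPolynomial.eval x p = x ⬝ᵥ B.mulVec x - 2 * Real.log c := by
    intro x
    simp only [hpdef, map_sub, map_sum, MvPolynomial.eval_mul, MvPolynomial.eval_C,
      MvPolynomial.eval_X, dotProduct, mulVec, Finset.mul_sum]
    congr 1
    refine Finset.sum_congr rfl fun i _ => Finset.sum_congr rfl fun j _ => by ring
  set U : Set (Fin n → ℝ) := ⋃ t, ⋃ _ : t ≠ s₀, F t with hUdef
  have hU : volume (F s₀ ∩ U) = 0 := by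
    have : F s₀ ∩ U = ⋃ t, ⋃ _ : t ≠ s₀, (F s₀ ∩ F t) := by
      simp [hUdef, Set.inter_iUnion]
    rw [this]
    exact measure_iUnion_null fun t => measure_iUnion_null fun h => hdisj s₀ t h.symm
  set G : Set (Fin n → ℝ) := {x | Real.exp (-(1 / 2) * (x ⬝ᵥ Psi⁻¹.mulVec x)) =
        c * ∑ s : S, Set.indicator (F s)
          (fun y => Real.exp (-(1 / 2) * (y ⬝ᵥ (M s).mulVec y))) x} with hGdef
  have hG : volume Gᶜ = 0 := by
    have := MeasureTheory.ae_iff.mp hid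
    simpa [hGdef, Set.compl_setOf] using this
  set E : Set (Fin n → ℝ) := F s₀ \ ((F s₀ ∩ U) ∪ Gᶜ) with hEdef
  have hEvol : volume E = volume (F s₀) :=
    measure_diff_null (measure_union_null hU hG)
  have hEne : volume E ≠ 0 := by rw [hEvol]; exact hs₀
  have hEsub : E ⊆ {x | MvPolynomial.eval x p = 0} := by
    intro x hx
    obtain ⟨hxF, hxn⟩ := hx
    rw [Set.mem_union] at hxn
    push_neg at hxn
    have hxU : x ∉ U := fun h => hxn.1 ⟨hxF, h⟩
    have hxG : x ∈ G := by
      have := hxn.2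
      simpa using this
    have hsum : (∑ s : S, Set.indicator (F s)
          (fun y => Real.exp (-(1 / 2) * (y ⬝ᵥ (M s).mulVec y))) x)
        = Real.exp (-(1 / 2) * (x ⬝ᵥ (M s₀).mulVec x)) := by
      rw [Finset.sum_eq_single s₀]
      · exact Set.indicator_of_mem hxF _
      · intro t _ ht
        refine Set.indicator_of_notMem (fun hxt => hxU ?_) _
        exact Set.mem_iUnion.mpr ⟨t, Set.mem_iUnion.mpr ⟨ht, hxt⟩⟩
      · intro h
        exact absurd (Finset.mem_univ s₀) h
    have heq : Real.exp (-(1 / 2) * (x ⬝ᵥ Psi⁻¹.mulVec x)) =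
        c * Real.exp (-(1 / 2) * (x ⬝ᵥ (M s₀).mulVec x)) := by
      rw [← hsum]; exact hxG
    have hlog := congrArg Real.log heq
    rw [Real.log_exp, Real.log_mul (ne_of_gt hc) (Real.exp_pos _).ne',
      Real.log_exp] at hlog
    rw [Set.mem_setOf_eq, heval x, hB, Matrix.sub_mulVec, dotProduct_sub]
    linarith
  have hp0 : p = 0 :=
    mvpoly_zero_of_nonnull n p fun h => hEne (measure_mono_null hEsub h)
  have hall : ∀ x : Fin n → ℝ, x ⬝ᵥ B.mulVec x = 2 * Real.log c := by
    intro x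
    have := heval x
    rw [hp0, map_zero] at this
    linarith
  have hlogc : Real.log c = 0 := by
    have := hall 0
    simpa using this.symm
  have hc1 : c = 1 := by
    have := Real.exp_log hc
    rw [hlogc, Real.exp_zero] at this
    exact this.symm
  have hQ : ∀ x : Fin n → ℝ, x ⬝ᵥ B.mulVec x = 0 := by
    intro x; rw [hall x, hlogc]; ring
  have hsym : ∀ i j, B i j = B j i := by
    intro i j
    have h1 : (Psi⁻¹) i j = (Psi⁻¹) j i := by
      simpa using hPsi.inv.1.apply j i
    have h2 : (M s₀) i j = (M s₀) j i := by
      simpa using (hM s₀).1.apply j i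
    simp [hB, Matrix.sub_apply, h1, h2]
  have hpolar : ∀ i j, B i j + B j i = 0 := by
    intro i j
    have hx := hQ (Pi.single i 1 + Pi.single j 1)
    have hi := hQ (Pi.single i (1:ℝ))
    have hj := hQ (Pi.single j (1:ℝ))
    rw [Matrix.mulVec_add, add_dotProduct, dotProduct_add, dotProduct_add] at hx
    have hij : (Pi.single i (1:ℝ)) ⬝ᵥ B.mulVec (Pi.single j 1) = B i j := by
      simp [Matrix.mulVec_single, single_dotProduct]
    have hji : (Pi.single j (1:ℝ)) ⬝ᵥ B.mulVec (Pi.single i 1) = B j i := by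
      simp [Matrix.mulVec_single, single_dotProduct]
    rw [hij, hji] at hx
    linarith
  have hB0 : B = 0 := by
    ext i j
    have := hpolar i j
    rw [hsym i j] at this
    have : B j i = 0 := by linarith
    rw [hsym i j]
    simpa using this
  refine ⟨hc1, ?_⟩
  have := sub_eq_zero.mp (hB ▸ hB0)
  exact this
end
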